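/- arXiv:2006.00496 — 2 statements merged into one kernel-verified Lean document; each statement's English description precedes it below -/
import Mathlib

section
/- For all N, k, n ≥ 0, the number of partitions of n into at most k parts, each part at most N, equals the coefficient of q^n in the Gaussian binomial coefficient [N+k choose N]_q. -/
open Polynomial

/-- Gaussian binomial coefficient `[n choose k]_q` as a polynomial in `ℤ[q]`,
defined by the Pascal-type recurrence; it is `0` when `k > n`. -/
noncomputable def gauss : ℕ → ℕ → Polynomial ℤ
  | _, 0 => 1
  | 0, _ + 1 => 0
  | n + 1, k + 1 => gauss n (k + 1) + Polynomial.X ^ (n - k) * gauss n k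

/-- `p(N,k,n)`: number of partitions of `n` into at most `k` parts, each part
positive and at most `N`. -/
noncomputable def pcount (N k n : ℕ) : ℕ :=
  Nat.card {s : Multiset ℕ //
    s.sum = n ∧ s.card ≤ k ∧ ∀ x ∈ s, 0 < x ∧ x ≤ N}

/-- `p̄_r(N₁,N₂,k₁,k₂,n)`: number of two-colored partitions of `n` with at most `k₁`
parts of the first kind, each positive, divisible by `r` and at most `N₁·r`, and at
most `k₂` parts of the second kind, each positive and at most `N₂`. -/
noncomputable def pbar (r N1 N2 k1 k2 n : ℕ) : ℕ :=
  Nat.card {p : Multiset ℕ × Multiset ℕ //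
    p.1.sum + p.2.sum = n ∧ p.1.card ≤ k1 ∧ p.2.card ≤ k2 ∧
    (∀ x ∈ p.1, 0 < x ∧ r ∣ x ∧ x ≤ N1 * r) ∧ (∀ x ∈ p.2, 0 < x ∧ x ≤ N2)}

/-- `p̄_r` with integer arguments: zero if any argument is negative. -/
noncomputable def pbarZ (r : ℕ) (N1 N2 k1 k2 n : ℤ) : ℕ :=
  if 0 ≤ N1 ∧ 0 ≤ N2 ∧ 0 ≤ k1 ∧ 0 ≤ k2 ∧ 0 ≤ n then
    pbar r N1.toNat N2.toNat k1.toNat k2.toNat n.toNat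
  else 0

/-- `Q̄_r(N₁,N₂,k₁,k₂,n)`: number of two-colored partitions of `n` with exactly `k₁`
distinct parts of the first kind, each positive, divisible by `r` and at most `N₁·r`,
and exactly `k₂` distinct parts of the second kind, each positive and at most `N₂`. -/
noncomputable def Qbar (r N1 N2 k1 k2 n : ℕ) : ℕ :=
  Nat.card {p : Multiset ℕ × Multiset ℕ //
    p.1.sum + p.2.sum = n ∧ p.1.Nodup ∧ p.2.Nodup ∧ p.1.card = k1 ∧ p.2.card = k2 ∧
    (∀ x ∈ p.1, 0 < x ∧ r ∣ x ∧ x ≤ N1 * r) ∧ (∀ x ∈ p.2, 0 < x ∧ x ≤ N2)}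

/-!
Write `G a b` for `[a+b choose a]_q`, the Gaussian binomial of an `a × b` box. The defining
recurrence is `G (a+1) (b+1) = G (a+1) b + q^(b+1) G a (b+1)`, and together with the absorption
identity `G (a+1) b (1 - q^(a+1)) = G a (b+1) (1 - q^(b+1))` it yields the conjugate recurrence
`G (a+1) (b+1) = G a (b+1) + q^(a+1) G (a+1) b`. Partitions of `n` in an `(N+1) × (k+1)` box obey
the same recurrence: either no part equals `N + 1`, or removing one part `N + 1` leaves a
partition of `n - (N+1)` in an `(N+1) × k` box. Both sides agree when `N = 0` or `k = 0`.
-/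

lemma gauss_succ_succ (n k : ℕ) :
    gauss (n + 1) (k + 1) = gauss n (k + 1) + X ^ (n - k) * gauss n k := rfl

lemma gauss_zero_right (n : ℕ) : gauss n 0 = 1 := by cases n <;> rfl

lemma gauss_eq_zero_of_lt : ∀ {n k : ℕ}, n < k → gauss n k = 0
  | 0, _ + 1, _ => rfl
  | n + 1, k + 1, h => by
    rw [gauss_succ_succ, gauss_eq_zero_of_lt (by omega : n < k + 1),
      gauss_eq_zero_of_lt (by omega : n < k), mul_zero, add_zero]

lemma gauss_self : ∀ n : ℕ, gauss n n = 1
  | 0 => rfl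
  | n + 1 => by
    rw [gauss_succ_succ, gauss_eq_zero_of_lt (Nat.lt_succ_self n), gauss_self n]
    simp

lemma gauss_succ_one_mul (n : ℕ) : gauss (n + 1) 1 * (1 - X) = 1 - X ^ (n + 1) := by
  induction n with
  | zero => rw [zero_add, gauss_self]; ring
  | succ n ih =>
    rw [gauss_succ_succ, gauss_zero_right, Nat.sub_zero]
    linear_combination ih

lemma gauss_succ_self_mul (n : ℕ) : gauss (n + 1) n * (1 - X) = 1 - X ^ (n + 1) := by
  induction n with
  | zero => rw [gauss_zero_right]; ring
  | succ n ih =>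
    rw [gauss_succ_succ, gauss_self, Nat.add_sub_cancel_left]
    linear_combination X * ih

lemma gauss_succ_add_succ (a b : ℕ) :
    gauss (a + 1 + (b + 1)) (a + 1) =
      gauss (a + 1 + b) (a + 1) + X ^ (b + 1) * gauss (a + (b + 1)) a := by
  rw [show a + 1 + (b + 1) = a + b + 1 + 1 by omega, gauss_succ_succ,
    show a + b + 1 - a = b + 1 by omega, show a + 1 + b = a + b + 1 by omega,
    show a + (b + 1) = a + b + 1 by omega]

lemma gauss_succ_right_eq : ∀ a b : ℕ,
    gauss (a + 1 + b) (a + 1) * (1 - X ^ (a + 1)) = gauss (a + (b + 1)) a * (1 - X ^ (b + 1))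
  | 0, b => by
    simp only [zero_add, pow_one, gauss_zero_right, one_mul]
    rw [add_comm 1 b, gauss_succ_one_mul]
  | a + 1, 0 => by
    simp only [add_zero, zero_add, pow_one, gauss_self, one_mul]
    rw [gauss_succ_self_mul]
  | a + 1, b + 1 => by
    linear_combination (1 - X ^ (a + 2)) * gauss_succ_add_succ (a + 1) b
      + gauss_succ_right_eq (a + 1) b - (1 - X ^ (b + 2)) * gauss_succ_add_succ a (b + 1)
      + X ^ (b + 2) * gauss_succ_right_eq a (b + 1)

lemma gauss_succ_add_succ' (a b : ℕ) :
    gauss (a + 1 + (b + 1)) (a + 1) =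
      gauss (a + (b + 1)) a + X ^ (a + 1) * gauss (a + 1 + b) (a + 1) := by
  linear_combination gauss_succ_add_succ a b + gauss_succ_right_eq a b

def boxPartitions (N k n : ℕ) : Set (Multiset ℕ) :=
  {s | s.sum = n ∧ s.card ≤ k ∧ ∀ x ∈ s, 0 < x ∧ x ≤ N}

lemma pcount_eq_ncard (N k n : ℕ) : pcount N k n = (boxPartitions N k n).ncard :=
  Nat.card_coe_set_eq _

lemma boxPartitions_finite (N k n : ℕ) : (boxPartitions N k n).Finite :=
  (Set.finite_range Nat.Partition.parts).subset fun s hs =>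
    ⟨⟨s, fun hx => (hs.2.2 _ hx).1, hs.1⟩, rfl⟩

lemma ncard_boxPartitions_of_subset_zero {N k n : ℕ} (h : boxPartitions N k n ⊆ {0}) :
    (boxPartitions N k n).ncard = if n = 0 then 1 else 0 := by
  split_ifs with hn
  · subst hn
    rw [Set.ncard_eq_one]
    exact ⟨0, Set.eq_singleton_iff_unique_mem.2 ⟨by simp [boxPartitions], h⟩⟩
  · rw [show boxPartitions N k n = ∅ from
      Set.eq_empty_of_forall_notMem fun s hs => hn (by rw [← hs.1, h hs]; rfl), Set.ncard_empty]

lemma ncard_boxPartitions_zero_maxPart (k n : ℕ) :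
    (boxPartitions 0 k n).ncard = if n = 0 then 1 else 0 :=
  ncard_boxPartitions_of_subset_zero fun s hs =>
    Multiset.eq_zero_of_forall_notMem fun x hx => by have := hs.2.2 x hx; omega

lemma ncard_boxPartitions_zero_numParts (N n : ℕ) :
    (boxPartitions N 0 n).ncard = if n = 0 then 1 else 0 :=
  ncard_boxPartitions_of_subset_zero fun _ hs => Multiset.card_eq_zero.1 (Nat.le_zero.1 hs.2.1)

lemma boxPartitions_succ_of_lt {N k n : ℕ} (hn : n < N + 1) :
    boxPartitions (N + 1) k n = boxPartitions N k n := by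
  ext s
  refine ⟨fun ⟨hsum, hcard, hs⟩ => ⟨hsum, hcard, fun x hx => ?_⟩,
    fun ⟨hsum, hcard, hs⟩ => ⟨hsum, hcard, fun x hx => ?_⟩⟩
  · have := Multiset.le_sum_of_mem hx
    have := hs x hx
    omega
  · have := hs x hx
    omega

lemma boxPartitions_succ_succ_add (N k n : ℕ) :
    boxPartitions (N + 1) (k + 1) (n + (N + 1)) =
      boxPartitions N (k + 1) (n + (N + 1)) ∪
        Multiset.cons (N + 1) '' boxPartitions (N + 1) k n := by
  ext s
  constructor
  · rintro ⟨hsum, hcard, hs⟩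
    by_cases hm : N + 1 ∈ s
    · right
      refine ⟨s.erase (N + 1), ⟨?_, ?_, fun x hx => hs x (Multiset.mem_of_mem_erase hx)⟩,
        Multiset.cons_erase hm⟩
      · have := Multiset.sum_erase hm
        omega
      · rw [Multiset.card_erase_of_mem hm, Nat.pred_eq_sub_one]
        omega
    · refine Or.inl ⟨hsum, hcard, fun x hx => ⟨(hs x hx).1, ?_⟩⟩
      have := (hs x hx).2
      have : x ≠ N + 1 := fun h => hm (h ▸ hx)
      omega
  · rintro (⟨hsum, hcard, hs⟩ | ⟨t, ⟨hsum, hcard, ht⟩, rfl⟩)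
    · exact ⟨hsum, hcard, fun x hx => ⟨(hs x hx).1, Nat.le_succ_of_le (hs x hx).2⟩⟩
    · refine ⟨by rw [Multiset.sum_cons, hsum, add_comm], by simpa using hcard, fun x hx => ?_⟩
      rcases Multiset.mem_cons.1 hx with rfl | hx
      · omega
      · exact ht x hx

lemma ncard_boxPartitions_succ_succ_add (N k n : ℕ) :
    (boxPartitions (N + 1) (k + 1) (n + (N + 1))).ncard =
      (boxPartitions N (k + 1) (n + (N + 1))).ncard + (boxPartitions (N + 1) k n).ncard := by
  have hdisj : Disjoint (boxPartitions N (k + 1) (n + (N + 1)))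
      (Multiset.cons (N + 1) '' boxPartitions (N + 1) k n) := by
    refine Set.disjoint_left.2 fun s hs ⟨t, _, ht⟩ => ?_
    have := (hs.2.2 (N + 1) (ht ▸ Multiset.mem_cons_self _ _)).2
    omega
  rw [boxPartitions_succ_succ_add, Set.ncard_union_eq hdisj (boxPartitions_finite _ _ _)
    ((boxPartitions_finite _ _ _).image _),
    Set.ncard_image_of_injective _ fun _ _ h => (Multiset.cons_inj_right _).1 h]

/-- The generating function of `p(N,k,n)` is the Gaussian binomial `[N+k choose N]_q`. -/
theorem stmt0 (N k n : ℕ) :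
    (gauss (N + k) N).coeff n = (pcount N k n : ℤ) := by
  rw [pcount_eq_ncard]
  induction N generalizing k n with
  | zero =>
    rw [zero_add, gauss_zero_right, coeff_one, ncard_boxPartitions_zero_maxPart]
    push_cast; rfl
  | succ N ihN =>
    induction k generalizing n with
    | zero =>
      rw [add_zero, gauss_self, coeff_one, ncard_boxPartitions_zero_numParts]
      push_cast; rfl
    | succ k ihk =>
      rw [gauss_succ_add_succ', coeff_add, coeff_X_pow_mul', ihN]
      split_ifs with hn
      · obtain ⟨m, rfl⟩ := Nat.exists_eq_add_of_le' hn
        rw [Nat.add_sub_cancel, ihk, ncard_boxPartitions_succ_succ_add]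
        push_cast
        ring
      · rw [boxPartitions_succ_of_lt (by omega), add_zero]
end

section
/- For N, k, n ≥ 0, p(N,k,n) = Σ_{j=0}^{⌊k/2⌋} p̄_2(N, N+1−k+2j, j, k−2j, n − C(k−2j,2)), where terms with any negative argument are zero. -/
open Polynomial

/-!
Pad a partition counted by `p(N,k,n)` with zeros to exactly `k` parts in `[0, N]`. Such a
multiset is uniquely `t + t + u` with `t` a multiset (its pairs of equal parts) and `u` a set
(the values of odd multiplicity); if `t` has `j` elements then `u` has `m = k - 2j`.
Doubling the positive parts of `t` gives the even parts of the first kind. Listing `u` as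
`x₀ < x₁ < ⋯ < x_{m-1}` and subtracting the staircase `0, 1, …, m-1` turns `m` distinct values
in `[0, N]` into `m` values in `[0, N + 1 - m]`, whose positive ones are the parts of the second
kind; this lowers the weight by `C(m, 2)`.
-/

theorem Nat.card_subtype_and_congr {α β : Type*} {P R : α → Prop} {Q S : β → Prop}
    (e : {a // P a} ≃ {b // Q b}) (h : ∀ a, R a.1 ↔ S (e a).1) :
    Nat.card {a // P a ∧ R a} = Nat.card {b // Q b ∧ S b} :=
  Nat.card_congr <| (Equiv.subtypeSubtypeEquivSubtypeInter P R).symm.trans <|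
    (e.subtypeEquiv h).trans (Equiv.subtypeSubtypeEquivSubtypeInter Q S)

theorem Nat.card_subtype_prod {α β : Type*} (P : α → Prop) (Q : β → Prop) (R : α × β → Prop) :
    Nat.card {p : α × β // (P p.1 ∧ Q p.2) ∧ R p} =
      Nat.card {q : {a // P a} × {b // Q b} // R (q.1, q.2)} :=
  Nat.card_congr <| (Equiv.subtypeSubtypeEquivSubtypeInter _ _).symm.trans
    (Equiv.subtypeEquiv Equiv.subtypeProdEquivProd fun _ => Iff.rfl)

theorem Nat.card_eq_sum_card_fiber {α : Type*} {P : α → Prop} [Finite {a // P a}] (f : α → ℕ)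
    (S : Finset ℕ) (hf : ∀ a, P a → f a ∈ S) :
    Nat.card {a // P a} = ∑ j ∈ S, Nat.card {a // P a ∧ f a = j} := by
  have := Fintype.ofFinite {a // P a}
  rw [Nat.card_eq_fintype_card, ← Finset.card_univ,
    Finset.card_eq_sum_card_fiberwise fun a _ => hf a.1 a.2]
  refine Finset.sum_congr rfl fun j _ => ?_
  rw [← Fintype.card_subtype, ← Nat.card_eq_fintype_card]
  exact Nat.card_congr (Equiv.subtypeSubtypeEquivSubtypeInter P (f · = j))

namespace List

def stairUp : ℕ → List ℕ → List ℕ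
  | _, [] => []
  | c, a :: l => (a + c) :: stairUp (c + 1) l

def stairDown : ℕ → List ℕ → List ℕ
  | _, [] => []
  | c, a :: l => (a - c) :: stairDown (c + 1) l

section

variable (c : ℕ) (l : List ℕ)

@[simp] theorem length_stairUp : (stairUp c l).length = l.length := by
  induction l generalizing c <;> simp [stairUp, *]

theorem stairDown_stairUp : stairDown c (stairUp c l) = l := by
  induction l generalizing c <;> simp [stairUp, stairDown, *]

theorem sum_stairUp : (stairUp c l).sum = l.sum + l.length * c + l.length.choose 2 := by
  induction l generalizing c with
  | nil => simp [stairUp]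
  | cons a l ih =>
    simp only [stairUp, sum_cons, ih, length_cons, Nat.choose_succ_succ', Nat.choose_one_right]
    ring

theorem pairwise_lt_stairUp_iff : (stairUp c l).Pairwise (· < ·) ↔ l.Pairwise (· ≤ ·) := by
  simp_rw [← isChain_iff_pairwise]
  induction l generalizing c with
  | nil => simp [stairUp]
  | cons a l ih =>
    cases l with
    | nil => simp [stairUp]
    | cons b l =>
      have := ih (c + 1)
      simp only [stairUp] at this ⊢
      rw [isChain_cons_cons, isChain_cons_cons, this,
        show a + c < b + (c + 1) ↔ a ≤ b by omega]

theorem forall_lt_stairUp_iff {l : List ℕ} (hl : l.Pairwise (· ≤ ·)) (B : ℕ) :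
    (∀ x ∈ stairUp c l, x < B) ↔ ∀ y ∈ l, y + c + l.length ≤ B := by
  induction l generalizing c with
  | nil => simp [stairUp]
  | cons a l ih =>
    rw [pairwise_cons] at hl
    simp only [stairUp, forall_mem_cons, ih (c + 1) hl.2, length_cons]
    cases l with
    | nil => simp
    | cons b l =>
      have hab := hl.1 b mem_cons_self
      constructor
      · rintro ⟨-, h⟩
        have := h b mem_cons_self
        exact ⟨by omega, fun x hx => by have := h x hx; omega⟩
      · rintro ⟨-, h⟩
        have := h b mem_cons_self
        exact ⟨by omega, fun x hx => by have := h x hx; omega⟩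

end

theorem stairUp_stairDown {c : ℕ} {l : List ℕ} (hl : l.Pairwise (· < ·)) (hc : ∀ x ∈ l, c ≤ x) :
    stairUp c (stairDown c l) = l := by
  induction l generalizing c with
  | nil => rfl
  | cons a l ih =>
    rw [pairwise_cons] at hl
    have hca : c ≤ a := hc a mem_cons_self
    simp only [stairDown, stairUp, Nat.sub_add_cancel hca, cons.injEq, true_and]
    exact ih hl.2 fun x hx => hca.trans_lt (hl.1 x hx)

theorem pairwise_le_stairDown {c : ℕ} {l : List ℕ} (hl : l.Pairwise (· < ·))
    (hc : ∀ x ∈ l, c ≤ x) : (stairDown c l).Pairwise (· ≤ ·) := by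
  rw [← pairwise_lt_stairUp_iff c, stairUp_stairDown hl hc]
  exact hl

theorem Pairwise.sort_coe {α : Type*} [LinearOrder α] {l : List α} (hl : l.Pairwise (· ≤ ·)) :
    Multiset.sort (l : Multiset α) = l :=
  mergeSort_eq_self _ hl

end List

namespace Multiset

open List

theorem pairwise_lt_stairUp_sort (t : Multiset ℕ) : (stairUp 0 t.sort).Pairwise (· < ·) :=
  (pairwise_lt_stairUp_iff 0 _).2 (t.pairwise_sort _)

def staircaseEquiv : Multiset ℕ ≃ Finset ℕ where
  toFun t := ⟨stairUp 0 t.sort, coe_nodup.2 t.pairwise_lt_stairUp_sort.nodup⟩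
  invFun s := stairDown 0 s.sort
  left_inv t := by
    simp only [Finset.sort, t.pairwise_lt_stairUp_sort.imp le_of_lt |>.sort_coe,
      stairDown_stairUp, sort_eq]
  right_inv s := by
    have hs : s.sort.Pairwise (· < ·) := sortedLT_iff_pairwise.1 s.sortedLT_sort
    ext1
    simp only [(pairwise_le_stairDown hs fun x _ => x.zero_le).sort_coe,
      stairUp_stairDown hs fun x _ => x.zero_le, Finset.sort_eq]

section

variable (t : Multiset ℕ)

theorem mem_staircaseEquiv {x : ℕ} : x ∈ staircaseEquiv t ↔ x ∈ stairUp 0 t.sort := mem_coe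

theorem card_staircaseEquiv : (staircaseEquiv t).card = card t := by
  simp [staircaseEquiv, Finset.card]

theorem sum_staircaseEquiv : ∑ x ∈ staircaseEquiv t, x = t.sum + (card t).choose 2 := by
  rw [Finset.sum_eq_multiset_sum, map_id', staircaseEquiv, Equiv.coe_fn_mk, sum_coe, sum_stairUp,
    length_sort, ← sum_coe, sort_eq]
  ring

theorem forall_lt_staircaseEquiv_iff (B : ℕ) :
    (∀ x ∈ staircaseEquiv t, x < B) ↔ ∀ y ∈ t, y + card t ≤ B := by
  simp only [mem_staircaseEquiv, forall_lt_stairUp_iff 0 (t.pairwise_sort _), length_sort,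
    mem_sort, add_zero]

end

section

variable {α : Type*} [DecidableEq α] {s : Multiset α} {a : α}

def halve (s : Multiset α) : Multiset α := ∑ a ∈ s.toFinset, replicate (s.count a / 2) a

def oddPart (s : Multiset α) : Finset α := s.toFinset.filter fun a => Odd (s.count a)

@[simp] theorem count_halve : (halve s).count a = s.count a / 2 := by
  simp +contextual [halve, count_sum', count_replicate]

theorem mem_oddPart : a ∈ oddPart s ↔ s.count a % 2 = 1 := by
  simp only [oddPart, Finset.mem_filter, mem_toFinset, Nat.odd_iff, and_iff_right_iff_imp]
  intro h
  exact count_pos.1 (by omega)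

def halveOddPartEquiv : Multiset α ≃ Multiset α × Finset α where
  toFun s := (halve s, oddPart s)
  invFun p := p.1 + p.1 + p.2.val
  left_inv s := by
    ext a
    simp only [count_add, count_halve, count_eq_of_nodup (oddPart s).nodup, Finset.mem_val,
      mem_oddPart]
    split_ifs <;> omega
  right_inv p := by
    obtain ⟨t, u⟩ := p
    refine Prod.ext (ext.2 fun a => ?_) (Finset.ext fun a => ?_)
    · simp only [count_halve, count_add, count_eq_of_nodup u.nodup, Finset.mem_val]
      split_ifs <;> omega
    · simp only [mem_oddPart, count_add, count_eq_of_nodup u.nodup, Finset.mem_val]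
      split_ifs with h <;> simp only [h, iff_true, iff_false] <;> omega

@[simp] theorem halveOddPartEquiv_symm_apply (p : Multiset α × Finset α) :
    halveOddPartEquiv.symm p = p.1 + p.1 + p.2.val := rfl

@[simp] theorem halve_add_add_val (t : Multiset α) (u : Finset α) : halve (t + t + u.val) = t :=
  congrArg Prod.fst (halveOddPartEquiv.apply_symm_apply (t, u))

theorem two_mul_card_halve_add_card_oddPart (s : Multiset α) :
    2 * card (halve s) + (oddPart s).card = card s := by
  conv_rhs => rw [← halveOddPartEquiv.symm_apply_apply s]
  simp [halveOddPartEquiv, two_mul]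

end

def padZerosEquiv (k : ℕ) {P : ℕ → Prop} (hP : P 0) :
    {s : Multiset ℕ // card s ≤ k ∧ ∀ x ∈ s, 0 < x ∧ P x} ≃
      {s : Multiset ℕ // card s = k ∧ ∀ x ∈ s, P x} where
  toFun s := ⟨s.1 + replicate (k - card s.1) 0, by
    obtain ⟨hk, hs⟩ := s.2
    refine ⟨by rw [card_add, card_replicate]; omega, fun x hx => ?_⟩
    rcases mem_add.1 hx with hx | hx
    · exact (hs x hx).2
    · rwa [eq_of_mem_replicate hx]⟩
  invFun s := ⟨s.1.filter (0 < ·), (card_le_card (filter_le _ _)).trans_eq s.2.1,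
    fun x hx => ⟨(mem_filter.1 hx).2, s.2.2 x (mem_filter.1 hx).1⟩⟩
  left_inv s := by
    ext1
    dsimp only
    rw [filter_add, filter_eq_self.2 fun x hx => (s.2.2 x hx).1,
      filter_eq_nil.2 fun x hx => by rw [eq_of_mem_replicate hx]; exact lt_irrefl 0, add_zero]
  right_inv s := by
    ext1
    dsimp only
    have hcard := congrArg card (filter_add_not (0 < ·) s.1)
    rw [card_add, s.2.1] at hcard
    refine Eq.trans ?_ (filter_add_not (0 < ·) s.1)
    congr 1
    rw [eq_comm, eq_replicate]
    exact ⟨by omega, fun x hx => by have := (mem_filter.1 hx).2; omega⟩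

@[simp] theorem sum_padZerosEquiv {k : ℕ} {P : ℕ → Prop} (hP : P 0)
    (s : {s : Multiset ℕ // card s ≤ k ∧ ∀ x ∈ s, 0 < x ∧ P x}) :
    (padZerosEquiv k hP s).1.sum = s.1.sum := by
  simp [padZerosEquiv]

def mulLeftEquiv {r : ℕ} (hr : 0 < r) (k N : ℕ) :
    {s : Multiset ℕ // card s ≤ k ∧ ∀ x ∈ s, 0 < x ∧ x ≤ N} ≃
      {s : Multiset ℕ // card s ≤ k ∧ ∀ x ∈ s, 0 < x ∧ r ∣ x ∧ x ≤ N * r} where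
  toFun s := ⟨s.1.map (r * ·), by
    refine ⟨(card_map _ _).trans_le s.2.1, fun x hx => ?_⟩
    obtain ⟨y, hy, rfl⟩ := mem_map.1 hx
    have := s.2.2 y hy
    exact ⟨Nat.mul_pos hr this.1, dvd_mul_right r y, by nlinarith⟩⟩
  invFun s := ⟨s.1.map (· / r), by
    refine ⟨(card_map _ _).trans_le s.2.1, fun x hx => ?_⟩
    obtain ⟨y, hy, rfl⟩ := mem_map.1 hx
    obtain ⟨hy0, hyr, hyN⟩ := s.2.2 y hy
    exact ⟨Nat.div_pos (Nat.le_of_dvd hy0 hyr) hr, Nat.div_le_of_le_mul (by linarith)⟩⟩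
  left_inv s := by
    ext1
    simp only [map_map, Function.comp_def, Nat.mul_div_cancel_left _ hr, map_id']
  right_inv s := by
    ext1
    dsimp only
    rw [map_map]
    exact (map_congr rfl fun x hx => Nat.mul_div_cancel' (s.2.2 x hx).2.1).trans (map_id _)

@[simp] theorem sum_mulLeftEquiv {r : ℕ} (hr : 0 < r) {k N : ℕ}
    (s : {s : Multiset ℕ // card s ≤ k ∧ ∀ x ∈ s, 0 < x ∧ x ≤ N}) :
    (mulLeftEquiv hr k N s).1.sum = r * s.1.sum := by
  simp only [mulLeftEquiv, Equiv.coe_fn_mk]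
  exact sum_map_mul_left.trans (by rw [map_id'])

theorem finite_setOf_card_eq_forall_le (k N : ℕ) :
    {s : Multiset ℕ | card s = k ∧ ∀ x ∈ s, x ≤ N}.Finite := by
  refine (Set.finite_range fun t : Sym (Fin (N + 1)) k =>
    (t : Multiset (Fin (N + 1))).map Fin.val).subset ?_
  rintro s ⟨hk, hN⟩
  lift s to Multiset (Fin (N + 1)) using fun x hx => Nat.lt_succ_of_le (hN x hx)
  exact ⟨⟨s, by simpa using hk⟩, rfl⟩

def scaledPadEquiv {r : ℕ} (hr : 0 < r) (j N : ℕ) :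
    {u : Multiset ℕ // card u ≤ j ∧ ∀ x ∈ u, 0 < x ∧ r ∣ x ∧ x ≤ N * r} ≃
      {t : Multiset ℕ // card t = j ∧ ∀ x ∈ t, x ≤ N} :=
  (mulLeftEquiv hr j N).symm.trans (padZerosEquiv j N.zero_le)

theorem sum_scaledPadEquiv {r : ℕ} (hr : 0 < r) {j N : ℕ}
    (u : {u : Multiset ℕ // card u ≤ j ∧ ∀ x ∈ u, 0 < x ∧ r ∣ x ∧ x ≤ N * r}) :
    r * (scaledPadEquiv hr j N u).1.sum = u.1.sum := by
  rw [scaledPadEquiv, Equiv.trans_apply, sum_padZerosEquiv, ← sum_mulLeftEquiv hr,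
    Equiv.apply_symm_apply]

def staircasePadEquiv {m N : ℕ} (hm : m ≤ N + 1) :
    {v : Multiset ℕ // card v ≤ m ∧ ∀ x ∈ v, 0 < x ∧ x ≤ N + 1 - m} ≃
      {u : Finset ℕ // u.card = m ∧ ∀ x ∈ u, x ≤ N} :=
  (padZerosEquiv m (N + 1 - m).zero_le).trans <| staircaseEquiv.subtypeEquiv fun t => by
    simp only [card_staircaseEquiv, ← Nat.lt_succ_iff, forall_lt_staircaseEquiv_iff]
    exact and_congr_right fun ht => forall₂_congr fun y _ => by omega

theorem sum_staircasePadEquiv {m N : ℕ} (hm : m ≤ N + 1)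
    (v : {v : Multiset ℕ // card v ≤ m ∧ ∀ x ∈ v, 0 < x ∧ x ≤ N + 1 - m}) :
    ∑ x ∈ (staircasePadEquiv hm v).1, x = v.1.sum + m.choose 2 := by
  rw [staircasePadEquiv, Equiv.trans_apply, Equiv.subtypeEquiv_apply, sum_staircaseEquiv,
    sum_padZerosEquiv, (padZerosEquiv m _ v).2.1]

end Multiset

open Multiset

theorem pcount_eq_card_card_eq (N k n : ℕ) :
    pcount N k n = Nat.card {s : Multiset ℕ // (card s = k ∧ ∀ x ∈ s, x ≤ N) ∧ s.sum = n} := by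
  rw [pcount, ← Nat.card_congr (Equiv.subtypeEquivRight fun _ => and_comm)]
  exact Nat.card_subtype_and_congr (padZerosEquiv k N.zero_le) fun s => by
    rw [sum_padZerosEquiv]

theorem pbar_eq_card (r N1 N2 k1 k2 n : ℕ) :
    pbar r N1 N2 k1 k2 n =
      Nat.card {q : {u : Multiset ℕ // card u ≤ k1 ∧ ∀ x ∈ u, 0 < x ∧ r ∣ x ∧ x ≤ N1 * r} ×
        {v : Multiset ℕ // card v ≤ k2 ∧ ∀ x ∈ v, 0 < x ∧ x ≤ N2} //
          q.1.1.sum + q.2.1.sum = n} := by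
  refine Eq.trans ?_ (Nat.card_subtype_prod _ _ fun p : Multiset ℕ × Multiset ℕ =>
    p.1.sum + p.2.sum = n)
  exact Nat.card_congr (Equiv.subtypeEquivRight fun _ => by tauto)

theorem pbarZ_natCast_sub_eq_card (r N1 N2 k1 k2 c n : ℕ) :
    pbarZ r N1 N2 k1 k2 ((n : ℤ) - c) =
      Nat.card {q : {u : Multiset ℕ // card u ≤ k1 ∧ ∀ x ∈ u, 0 < x ∧ r ∣ x ∧ x ≤ N1 * r} ×
        {v : Multiset ℕ // card v ≤ k2 ∧ ∀ x ∈ v, 0 < x ∧ x ≤ N2} //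
          q.1.1.sum + q.2.1.sum + c = n} := by
  by_cases hc : c ≤ n
  · rw [pbarZ, if_pos (by omega), pbar_eq_card]
    simp only [Int.toNat_natCast, show ((n : ℤ) - c).toNat = n - c by omega]
    exact Nat.card_congr (Equiv.subtypeEquivRight fun _ => by omega)
  · rw [pbarZ, if_neg (by omega), eq_comm, Nat.card_eq_zero]
    exact Or.inl ⟨fun q => hc (by have := q.2; omega)⟩

theorem card_multiset_finset_eq_pbarZ (N j m n : ℕ) :
    Nat.card {q : {t : Multiset ℕ // card t = j ∧ ∀ x ∈ t, x ≤ N} ×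
      {u : Finset ℕ // u.card = m ∧ ∀ x ∈ u, x ≤ N} // 2 * q.1.1.sum + ∑ x ∈ q.2.1, x = n} =
      pbarZ 2 N ((N : ℤ) + 1 - m) j m ((n : ℤ) - m.choose 2) := by
  rcases le_or_gt m (N + 1) with hm | hm
  · rw [show (N : ℤ) + 1 - m = ((N + 1 - m : ℕ) : ℤ) by omega, pbarZ_natCast_sub_eq_card]
    refine (Nat.card_congr <| ((scaledPadEquiv two_pos j N).prodCongr
      (staircasePadEquiv hm)).subtypeEquiv fun q => ?_).symm
    rw [Equiv.prodCongr_apply, Prod.map_fst, Prod.map_snd, sum_scaledPadEquiv,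
      sum_staircasePadEquiv]
    omega
  · have : IsEmpty {u : Finset ℕ // u.card = m ∧ ∀ x ∈ u, x ≤ N} := ⟨fun u => by
      have := Finset.card_le_card (s := u.1) (t := Finset.range (N + 1))
        fun x hx => Finset.mem_range.2 (Nat.lt_succ_of_le (u.2.2 x hx))
      rw [u.2.1, Finset.card_range] at this
      omega⟩
    rw [pbarZ, if_neg (by omega), Nat.card_eq_zero]
    exact Or.inl ⟨fun q => IsEmpty.false q.1.2⟩

theorem card_fiber_halve_eq_card_prod (N k n j : ℕ) (hj : 2 * j ≤ k) :
    Nat.card {s : Multiset ℕ // ((card s = k ∧ ∀ x ∈ s, x ≤ N) ∧ s.sum = n) ∧ card (halve s) = j} =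
      Nat.card {q : {t : Multiset ℕ // card t = j ∧ ∀ x ∈ t, x ≤ N} ×
        {u : Finset ℕ // u.card = k - 2 * j ∧ ∀ x ∈ u, x ≤ N} //
          2 * q.1.1.sum + ∑ x ∈ q.2.1, x = n} := by
  refine Eq.trans ?_ (Nat.card_subtype_prod _ _ fun p : Multiset ℕ × Finset ℕ =>
    2 * p.1.sum + ∑ x ∈ p.2, x = n)
  refine (Nat.card_congr <| halveOddPartEquiv.symm.subtypeEquiv fun p => ?_).symm
  obtain ⟨t, u⟩ := p
  simp only [halveOddPartEquiv_symm_apply, halve_add_add_val, card_add, Finset.card_val,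
    Multiset.sum_add, Finset.sum_val, mem_add, Finset.mem_val, or_imp, forall_and, and_self]
  rw [show u.sum id = ∑ x ∈ u, x from rfl]
  constructor
  · rintro ⟨⟨⟨ht, htN⟩, hu, huN⟩, hs⟩
    exact ⟨⟨⟨by omega, htN, huN⟩, by omega⟩, ht⟩
  · rintro ⟨⟨⟨hk, htN, huN⟩, hs⟩, ht⟩
    exact ⟨⟨⟨ht, htN⟩, by omega, huN⟩, by omega⟩

theorem stmt14 (N k n : ℕ) :
    pcount N k n =
      ∑ j ∈ Finset.range (k / 2 + 1),
        pbarZ 2 (N : ℤ) ((N : ℤ) + 1 - k + 2 * j) (j : ℤ) ((k : ℤ) - 2 * j)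
          ((n : ℤ) - (k - 2 * j).choose 2) := by
  have : Finite {s : Multiset ℕ // (card s = k ∧ ∀ x ∈ s, x ≤ N) ∧ s.sum = n} :=
    ((finite_setOf_card_eq_forall_le k N).subset fun _ hs => hs.1).to_subtype
  rw [pcount_eq_card_card_eq,
    Nat.card_eq_sum_card_fiber (card <| halve ·) (Finset.range (k / 2 + 1)) fun s _ => by
      have := two_mul_card_halve_add_card_oddPart s
      rw [Finset.mem_range]
      omega]
  refine Finset.sum_congr rfl fun j hj => ?_
  have hjk : 2 * j ≤ k := by rw [Finset.mem_range] at hj; omega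
  rw [card_fiber_halve_eq_card_prod N k n j hjk, card_multiset_finset_eq_pbarZ]
  congr 2 <;> omega
end
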